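/- arXiv:1811.06493 — 2 statements merged into one kernel-verified Lean document; each statement's English description precedes it below -/
import Mathlib

section
/- Frostman-type lemma for intermediate dimensions: Let F ⊆ ℝⁿ be compact, θ ∈ (0,1], and 0 < s < lower θ-intermediate dimension of F. Then there exists c > 0 such that for every δ ∈ (0,1) there is a Borel probability measure μ_δ supported on F (which may be taken to be a finite sum of atoms) satisfying μ_δ(B(x,r)) ≤ c·r^s for all x ∈ ℝⁿ and all δ^{1/θ} ≤ r ≤ δ. -/
open Set

noncomputable section

/-- There is a countable cover of `F` by sets whose diameters all lie between `lo` and `hi`,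
with `s`-power diameter sum at most `ε`. -/
def ICov {X : Type} [PseudoEMetricSpace X] (F : Set X) (s lo hi ε : ℝ) : Prop :=
  ∃ (ι : Type) (_ : Countable ι) (U : ι → Set X), F ⊆ ⋃ i, U i ∧
    (∀ i, ENNReal.ofReal lo ≤ EMetric.diam (U i) ∧ EMetric.diam (U i) ≤ ENNReal.ofReal hi) ∧
    ∑' i, EMetric.diam (U i) ^ s ≤ ENNReal.ofReal ε

/-- There is a countable cover of `F` with no diameter restrictions and
`s`-power diameter sum at most `ε`. -/
def HCov {X : Type} [PseudoEMetricSpace X] (F : Set X) (s ε : ℝ) : Prop :=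
  ∃ (ι : Type) (_ : Countable ι) (U : ι → Set X), F ⊆ ⋃ i, U i ∧
    ∑' i, EMetric.diam (U i) ^ s ≤ ENNReal.ofReal ε

/-- The lower `θ`-intermediate dimension. -/
def lowerIDim {X : Type} [PseudoEMetricSpace X] (F : Set X) (θ : ℝ) : ℝ :=
  if θ = 0 then sInf {s : ℝ | 0 ≤ s ∧ ∀ ε > 0, HCov F s ε}
  else sInf {s : ℝ | 0 ≤ s ∧ ∀ ε > 0, ∀ δ₀ > 0, ∃ δ : ℝ, 0 < δ ∧ δ ≤ δ₀ ∧
    ICov F s (δ ^ (1 / θ)) δ ε}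

/-- The upper `θ`-intermediate dimension. -/
def upperIDim {X : Type} [PseudoEMetricSpace X] (F : Set X) (θ : ℝ) : ℝ :=
  if θ = 0 then sInf {s : ℝ | 0 ≤ s ∧ ∀ ε > 0, HCov F s ε}
  else sInf {s : ℝ | 0 ≤ s ∧ ∀ ε > 0, ∃ δ₀ > (0:ℝ), ∀ δ : ℝ, 0 < δ → δ ≤ δ₀ →
    ICov F s (δ ^ (1 / θ)) δ ε}

/-- A countable cover of `F` by sets all of diameter exactly `δ`,
with `s`-power diameter sum at most `ε`. -/
def EqCov {X : Type} [PseudoEMetricSpace X] (F : Set X) (s δ ε : ℝ) : Prop :=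
  ∃ (ι : Type) (_ : Countable ι) (U : ι → Set X), F ⊆ ⋃ i, U i ∧
    (∀ i, EMetric.diam (U i) = ENNReal.ofReal δ) ∧
    ∑' i, EMetric.diam (U i) ^ s ≤ ENNReal.ofReal ε

/-- The lower box dimension. -/
def lowerBoxDim {X : Type} [PseudoEMetricSpace X] (F : Set X) : ℝ :=
  sInf {s : ℝ | 0 ≤ s ∧ ∀ ε > 0, ∀ δ₀ > 0, ∃ δ : ℝ, 0 < δ ∧ δ ≤ δ₀ ∧ EqCov F s δ ε}

/-- The upper box dimension. -/
def upperBoxDim {X : Type} [PseudoEMetricSpace X] (F : Set X) : ℝ :=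
  sInf {s : ℝ | 0 ≤ s ∧ ∀ ε > 0, ∃ δ₀ > (0:ℝ), ∀ δ : ℝ, 0 < δ → δ ≤ δ₀ → EqCov F s δ ε}

/-- The Assouad dimension. -/
def assouadDim {X : Type} [PseudoEMetricSpace X] (F : Set X) : ℝ :=
  sInf {s : ℝ | 0 ≤ s ∧ ∃ C > (0:ℝ), ∀ x ∈ F, ∀ r R : ℝ, 0 < r → r < R →
    ∃ t : Finset (Set X), (F ∩ EMetric.closedBall x (ENNReal.ofReal R) ⊆ ⋃ U ∈ t, U) ∧
      (∀ U ∈ t, EMetric.diam U ≤ ENNReal.ofReal r) ∧ (t.card : ℝ) ≤ C * (R / r) ^ s}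

end

/-!
Frostman's dyadic construction, run only between the scales `δ ^ (1 / θ)` and `δ`. Put mass
`2 ^ (-M s)` on one point of `F` in each dyadic cube of side `2⁻ᴹ ≈ δ ^ (1 / θ)` that meets `F`.
Then, for `j = M - 1, …, m` (with `2⁻ᵐ ≈ δ`), rescale the mass inside every dyadic cube of side
`2⁻ʲ` so that it is at most `2 ^ (-j s)`. Every point lies in a largest cube whose mass equals its
cap. These cubes are disjoint and cover `F`, and their sides lie between `δ ^ (1 / θ)` and `δ` up to
constants. Since `s` is below the lower intermediate dimension, their `s`-power sum, which is the
total mass, exceeds a fixed `ε > 0` up to a constant factor. After normalising, a ball of radius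
`r ∈ [δ ^ (1 / θ), δ]` meets a bounded number of cubes of side `≈ r`, each of mass at most
`≈ r ^ s`.
-/

open Finset Metric MeasureTheory
open scoped ENNReal

noncomputable section

lemma ENNReal.mul_min_one_div {S : ℝ≥0∞} (hS : S ≠ ∞) (q : ℝ≥0∞) :
    S * min 1 (q / S) = min S q := by
  rcases eq_or_ne S 0 with rfl | hS0
  · simp
  · rw [mul_min, mul_one, ENNReal.mul_div_cancel hS0 hS]

lemma Metric.ediam_closedBall_eq {X : Type*} [NormedAddCommGroup X] [NormedSpace ℝ X]
    [Nontrivial X] (x : X) {r : ℝ} (hr : 0 ≤ r) :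
    ediam (closedBall x r) = ENNReal.ofReal (2 * r) := by
  rw [← diam_closedBall_eq x hr, diam, ENNReal.ofReal_toReal isBounded_closedBall.ediam_ne_top]

lemma exists_isProbabilityMeasure_sum_dirac {α : Type*} [MeasurableSpace α]
    [MeasurableSingletonClass α] (P : Finset α) (w : α → ℝ≥0∞) (h0 : ∑ u ∈ P, w u ≠ 0)
    (htop : ∑ u ∈ P, w u ≠ ∞) :
    ∃ μ : Measure α, IsProbabilityMeasure μ ∧ μ (↑P)ᶜ = 0 ∧
      ∀ A, μ A = (∑ u ∈ P, w u)⁻¹ * ∑ u ∈ P, A.indicator w u := by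
  have happly : ∀ A, (∑ u ∈ P, w u • Measure.dirac u) A = ∑ u ∈ P, A.indicator w u := by
    intro A
    rw [Measure.coe_finset_sum, Finset.sum_apply]
    refine sum_congr rfl fun u _ => ?_
    by_cases hu : u ∈ A <;> simp [Measure.dirac_apply, hu]
  refine ⟨(∑ u ∈ P, w u)⁻¹ • ∑ u ∈ P, w u • Measure.dirac u, ⟨?_⟩, ?_, fun A => ?_⟩
  · rw [Measure.smul_apply, happly, Set.indicator_univ, smul_eq_mul,
      ENNReal.inv_mul_cancel h0 htop]
  · rw [Measure.smul_apply, happly,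
      sum_eq_zero fun u hu => Set.indicator_of_notMem (not_not.2 (mem_coe.2 hu)) w, smul_zero]
  · rw [Measure.smul_apply, happly, smul_eq_mul]

lemma nonempty_of_not_ICov {X : Type} [PseudoEMetricSpace X] {F : Set X} {s lo hi ε : ℝ}
    (h : ¬ICov F s lo hi ε) : F.Nonempty := by
  rw [Set.nonempty_iff_ne_empty]
  rintro rfl
  exact h ⟨Empty, inferInstance, Empty.elim, Set.empty_subset _, fun i => i.elim, by simp⟩

lemma ofReal_lt_sum_of_not_ICov {X : Type} [NormedAddCommGroup X] [NormedSpace ℝ X]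
    [Nontrivial X] {F : Set X} {s lo hi ε : ℝ} (hni : ¬ICov F s lo hi ε) (hlo : 0 ≤ lo)
    (hlohi : lo ≤ hi) {β : Type} (G : Finset β) (c : β → X) (R : β → ℝ)
    (hcov : F ⊆ ⋃ γ ∈ G, closedBall (c γ) (R γ)) (hR : ∀ γ ∈ G, 2 * R γ ≤ hi) :
    ENNReal.ofReal ε < ∑ γ ∈ G, ENNReal.ofReal (max (2 * R γ) lo) ^ s := by
  have hdiam : ∀ γ, ediam (closedBall (c γ) (max (2 * R γ) lo / 2)) =
      ENNReal.ofReal (max (2 * R γ) lo) := fun γ => by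
    rw [ediam_closedBall_eq _ (by positivity), mul_div_cancel₀ _ two_ne_zero]
  by_contra! hsum
  apply hni
  unfold ICov
  refine ⟨G, inferInstance, fun γ => closedBall (c γ) (max (2 * R γ) lo / 2), ?_, ?_, ?_⟩
  · refine hcov.trans (Set.iUnion₂_subset fun γ hγ => ?_)
    refine (closedBall_subset_closedBall ?_).trans
      (Set.subset_iUnion (fun γ : G => closedBall (c γ) (max (2 * R γ) lo / 2)) ⟨γ, hγ⟩)
    linarith [le_max_left (2 * R γ) lo]
  · intro γ
    rw [show EMetric.diam = ediam from rfl, hdiam]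
    exact ⟨ENNReal.ofReal_le_ofReal (le_max_right _ _),
      ENNReal.ofReal_le_ofReal (max_le (hR γ γ.2) hlohi)⟩
  · rw [show EMetric.diam = ediam from rfl, tsum_fintype]
    simp_rw [hdiam]
    rwa [sum_coe_sort G fun γ => ENNReal.ofReal (max (2 * R γ) lo) ^ s]

lemma exists_not_ICov_of_lt_lowerIDim {X : Type} [PseudoEMetricSpace X] {F : Set X} {θ s : ℝ}
    (hθ : θ ≠ 0) (hs : 0 ≤ s) (h : s < lowerIDim F θ) :
    ∃ ε > 0, ∃ δ₀ > 0, ∀ δ, 0 < δ → δ ≤ δ₀ → ¬ICov F s (δ ^ (1 / θ)) δ ε := by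
  rw [lowerIDim, if_neg hθ] at h
  by_contra! hcov
  exact h.not_ge (csInf_le ⟨0, fun _ hx => hx.1⟩ ⟨hs, hcov⟩)

lemma lowerIDim_eq_zero_of_subsingleton {X : Type} [PseudoEMetricSpace X] [Subsingleton X]
    {F : Set X} (hF : F.Nonempty) {θ : ℝ} (hθ : θ ≠ 0) : lowerIDim F θ = 0 := by
  rw [lowerIDim, if_neg hθ]
  refine (congrArg sInf (Set.eq_empty_of_forall_notMem fun s' hs' => ?_)).trans Real.sInf_empty
  obtain ⟨δ, hδ, -, ι, -, U, hcov, hdiam, -⟩ := hs'.2 1 one_pos 1 one_pos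
  obtain ⟨i, -⟩ := Set.mem_iUnion.1 (hcov hF.some_mem)
  have hlo := (hdiam i).1
  rw [show EMetric.diam = ediam from rfl, ediam_subsingleton Set.subsingleton_of_subsingleton]
    at hlo
  exact (ENNReal.ofReal_pos.2 (Real.rpow_pos_of_pos hδ _)).not_ge hlo

def IsFrostmanMeasure {X : Type*} [PseudoMetricSpace X] [MeasurableSpace X] (μ : Measure X)
    (F : Set X) (s c lo hi : ℝ) : Prop :=
  IsProbabilityMeasure μ ∧ μ Fᶜ = 0 ∧ (∃ t : Finset X, μ (↑t)ᶜ = 0) ∧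
    ∀ x r, lo ≤ r → r ≤ hi → μ (closedBall x r) ≤ ENNReal.ofReal (c * r ^ s)

lemma IsFrostmanMeasure.mono_const {X : Type*} [PseudoMetricSpace X] [MeasurableSpace X]
    {μ : Measure X} {F : Set X} {s c c' lo hi : ℝ} (hμ : IsFrostmanMeasure μ F s c lo hi)
    (hlo : 0 ≤ lo) (hc : c ≤ c') : IsFrostmanMeasure μ F s c' lo hi :=
  ⟨hμ.1, hμ.2.1, hμ.2.2.1, fun x r hr hr' => (hμ.2.2.2 x r hr hr').trans <|
    ENNReal.ofReal_le_ofReal (mul_le_mul_of_nonneg_right hc (Real.rpow_nonneg (hlo.trans hr) s))⟩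

lemma isFrostmanMeasure_dirac {X : Type*} [PseudoMetricSpace X] [MeasurableSpace X]
    [MeasurableSingletonClass X] {F : Set X} {x₀ : X} (hx₀ : x₀ ∈ F) {s c ρ lo : ℝ} (hs : 0 ≤ s)
    (hρ : 0 < ρ) (hlo : ρ ≤ lo) (hc : (ρ ^ s)⁻¹ ≤ c) (hi : ℝ) :
    IsFrostmanMeasure (Measure.dirac x₀) F s c lo hi := by
  refine ⟨inferInstance, by simp [hx₀], ⟨{x₀}, by simp⟩, fun x r hr _ => prob_le_one.trans ?_⟩
  have hρs : 0 < ρ ^ s := Real.rpow_pos_of_pos hρ s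
  rw [← ENNReal.ofReal_one]
  refine ENNReal.ofReal_le_ofReal ((inv_mul_cancel₀ hρs.ne').symm.le.trans ?_)
  exact mul_le_mul hc (Real.rpow_le_rpow hρ.le (hlo.trans hr) hs) hρs.le
    ((inv_pos.2 hρs).le.trans hc)

namespace Frostman

section CappedWeight

variable {α κ : Type*} [DecidableEq κ] (P : Finset α) (k : ℕ → α → κ) (p : ℕ → ℝ≥0∞)

def blockMass (t : ℕ) (a : κ) (f : α → ℝ≥0∞) : ℝ≥0∞ :=
  ∑ u ∈ P with k t u = a, f u

/-- Every point starts with mass `p 0`; at level `t + 1` the masses in each block `k (t + 1) = a`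
are scaled down uniformly so that the block carries mass at most `p (t + 1)`. -/
def cappedWeight : ℕ → α → ℝ≥0∞
  | 0, _ => p 0
  | t + 1, u =>
      cappedWeight t u * min 1 (p (t + 1) / blockMass P k (t + 1) (k (t + 1) u) (cappedWeight t))

variable {P k p}

lemma cappedWeight_succ_le (t : ℕ) (u : α) :
    cappedWeight P k p (t + 1) u ≤ cappedWeight P k p t u :=
  mul_le_of_le_one_right' (min_le_left _ _)

lemma cappedWeight_anti {t t' : ℕ} (h : t ≤ t') (u : α) :
    cappedWeight P k p t' u ≤ cappedWeight P k p t u :=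
  antitone_nat_of_succ_le (f := fun t => cappedWeight P k p t u)
    (fun t => cappedWeight_succ_le t u) h

lemma cappedWeight_ne_top (hp : p 0 ≠ ∞) {t : ℕ} {u : α} : cappedWeight P k p t u ≠ ∞ :=
  ne_top_of_le_ne_top hp (cappedWeight_anti (Nat.zero_le t) u)

lemma blockMass_cappedWeight_ne_top (hp : p 0 ≠ ∞) (t t' : ℕ) (a : κ) :
    blockMass P k t a (cappedWeight P k p t') ≠ ∞ :=
  ENNReal.sum_ne_top.2 fun _ _ => cappedWeight_ne_top hp

lemma blockMass_cappedWeight_succ (hp : p 0 ≠ ∞) (t : ℕ) (a : κ) :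
    blockMass P k (t + 1) a (cappedWeight P k p (t + 1)) =
      min (blockMass P k (t + 1) a (cappedWeight P k p t)) (p (t + 1)) := by
  rw [← ENNReal.mul_min_one_div (blockMass_cappedWeight_ne_top hp _ _ _), blockMass, blockMass,
    sum_mul]
  refine sum_congr rfl fun u hu => ?_
  rw [cappedWeight, (mem_filter.1 hu).2]
  rfl

lemma blockMass_cappedWeight_le (hk : Set.InjOn (k 0) P) (hp : p 0 ≠ ∞) {t T : ℕ} (h : t ≤ T)
    (a : κ) : blockMass P k t a (cappedWeight P k p T) ≤ p t := by
  refine le_trans (b := blockMass P k t a (cappedWeight P k p t))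
    (sum_le_sum fun u _ => cappedWeight_anti h u) ?_
  cases t with
  | zero =>
    have hcard : #{u ∈ P | k 0 u = a} ≤ 1 := card_le_one.2 fun u hu v hv => by
      rw [mem_filter] at hu hv
      exact hk hu.1 hv.1 (hu.2.trans hv.2.symm)
    calc blockMass P k 0 a (cappedWeight P k p 0) = #{u ∈ P | k 0 u = a} • p 0 := sum_const _
      _ ≤ 1 • p 0 := nsmul_le_nsmul_left zero_le hcard
      _ = p 0 := one_nsmul _
  | succ t =>
    rw [blockMass_cappedWeight_succ hp]
    exact min_le_right _ _

lemma cappedWeight_succ_eq (hp : p 0 ≠ ∞) {t : ℕ} {u : α}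
    (h : blockMass P k (t + 1) (k (t + 1) u) (cappedWeight P k p t) < p (t + 1)) :
    cappedWeight P k p (t + 1) u = cappedWeight P k p t u := by
  have hS := blockMass_cappedWeight_ne_top (P := P) (k := k) hp (t + 1) t (k (t + 1) u)
  have hone : 1 ≤ p (t + 1) / blockMass P k (t + 1) (k (t + 1) u) (cappedWeight P k p t) :=
    (ENNReal.le_div_iff_mul_le (Or.inr h.ne_bot) (Or.inl hS)).2 (by rw [one_mul]; exact h.le)
  rw [cappedWeight, min_eq_left hone, mul_one]

variable (hk : Set.InjOn (k 0) P)
  (hnest : ∀ ⦃r r'⦄, r ≤ r' → ∀ ⦃u v⦄, k r u = k r v → k r' u = k r' v) (hp : p 0 ≠ ∞)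
include hk hnest hp

lemma exists_saturated_level (T : ℕ) {u : α} (hu : u ∈ P) :
    ∃ r ≤ T, blockMass P k r (k r u) (cappedWeight P k p T) = p r := by
  induction T with
  | zero =>
    refine ⟨0, le_rfl, ?_⟩
    have hblock : {v ∈ P | k 0 v = k 0 u} = {u} := by
      ext v
      simp only [mem_filter, Finset.mem_singleton]
      exact ⟨fun hv => hk hv.1 hu hv.2, by rintro rfl; exact ⟨hu, rfl⟩⟩
    rw [blockMass, hblock, sum_singleton, cappedWeight]
  | succ T ih =>
    by_cases hsat : p (T + 1) ≤ blockMass P k (T + 1) (k (T + 1) u) (cappedWeight P k p T)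
    · exact ⟨T + 1, le_rfl, by rw [blockMass_cappedWeight_succ hp, min_eq_right hsat]⟩
    · obtain ⟨r, hr, hmass⟩ := ih
      refine ⟨r, hr.trans T.le_succ, hmass ▸ sum_congr rfl fun v hv => ?_⟩
      refine cappedWeight_succ_eq hp ?_
      rw [hnest (hr.trans T.le_succ) (mem_filter.1 hv).2]
      exact not_le.1 hsat

/-- Grouping the points by their highest saturated block writes the total mass as the sum of `p`
over disjoint blocks. -/
theorem exists_sum_cappedWeight_eq (T : ℕ) :
    ∃ ρ : α → ℕ, (∀ u, ρ u ≤ T) ∧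
      ∑ u ∈ P, cappedWeight P k p T u = ∑ γ ∈ P.image (fun u => (ρ u, k (ρ u) u)), p γ.1 := by
  classical
  let ρ (u : α) : ℕ :=
    Nat.findGreatest (fun r => blockMass P k r (k r u) (cappedWeight P k p T) = p r) T
  have hρ : ∀ u ∈ P, blockMass P k (ρ u) (k (ρ u) u) (cappedWeight P k p T) = p (ρ u) :=
    fun u hu => let ⟨_, hr, hmass⟩ := exists_saturated_level hk hnest hp T hu
      Nat.findGreatest_spec (P := fun r => blockMass P k r (k r u) _ = p r) hr hmass
  have hρ_eq : ∀ u ∈ P, ∀ v ∈ P, k (ρ u) v = k (ρ u) u → ρ v = ρ u := by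
    intro u hu v hv huv
    have hle : ρ u ≤ ρ v := Nat.le_findGreatest (Nat.findGreatest_le T) (huv ▸ hρ u hu)
    refine le_antisymm (Nat.le_findGreatest (Nat.findGreatest_le T) ?_) hle
    rw [← hnest hle huv]
    exact hρ v hv
  refine ⟨ρ, fun u => Nat.findGreatest_le T, (sum_image' _ fun u hu => ?_).symm⟩
  have hblock : {v ∈ P | (ρ v, k (ρ v) v) = (ρ u, k (ρ u) u)} =
      {v ∈ P | k (ρ u) v = k (ρ u) u} := by
    refine filter_congr fun v hv => ⟨fun h => ?_, fun h => ?_⟩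
    · obtain ⟨h₁, h₂⟩ := Prod.mk.inj h
      rwa [h₁] at h₂
    · rw [hρ_eq u hu v hv h, h]
  rw [hblock]
  exact (hρ u hu).symm

end CappedWeight

variable {n : ℕ}

def dyadicIndex (j : ℕ) (x : EuclideanSpace ℝ (Fin n)) : Fin n → ℤ :=
  fun i => ⌊2 ^ j * x i⌋

def dyadicCorner (j : ℕ) (a : Fin n → ℤ) : EuclideanSpace ℝ (Fin n) :=
  WithLp.toLp 2 fun i => a i / 2 ^ j

lemma dyadicIndex_eq_of_le {j j' : ℕ} (h : j ≤ j') {x y : EuclideanSpace ℝ (Fin n)}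
    (hxy : dyadicIndex j' x = dyadicIndex j' y) : dyadicIndex j x = dyadicIndex j y := by
  have hdiv : ∀ z : EuclideanSpace ℝ (Fin n), ∀ i,
      dyadicIndex j z i = dyadicIndex j' z i / ((2 ^ (j' - j) : ℕ) : ℤ) := by
    intro z i
    rw [dyadicIndex, dyadicIndex, ← Int.floor_div_natCast]
    congr 1
    rw [Nat.cast_pow, Nat.cast_ofNat, ← Nat.add_sub_cancel' h, pow_add, Nat.add_sub_cancel_left]
    field_simp
  funext i
  rw [hdiv x, hdiv y, hxy]

lemma dyadicIndex_sub_nested (M : ℕ) ⦃t t' : ℕ⦄ (h : t ≤ t') ⦃x y : EuclideanSpace ℝ (Fin n)⦄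
    (hxy : dyadicIndex (M - t) x = dyadicIndex (M - t) y) :
    dyadicIndex (M - t') x = dyadicIndex (M - t') y :=
  dyadicIndex_eq_of_le (Nat.sub_le_sub_left h M) hxy

lemma dist_le_sqrt_mul_of_abs_sub_le {x y : EuclideanSpace ℝ (Fin n)} {c : ℝ} (hc : 0 ≤ c)
    (h : ∀ i, |x i - y i| ≤ c) : dist x y ≤ √n * c := by
  rw [EuclideanSpace.dist_eq, ← Real.sqrt_sq hc, ← Real.sqrt_mul (Nat.cast_nonneg n)]
  refine Real.sqrt_le_sqrt ?_
  calc ∑ i, dist (x i) (y i) ^ 2 ≤ ∑ _i : Fin n, c ^ 2 :=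
        sum_le_sum fun i _ => pow_le_pow_left₀ dist_nonneg (h i) 2
    _ = n * c ^ 2 := by simp

lemma dist_dyadicCorner_le (j : ℕ) (x : EuclideanSpace ℝ (Fin n)) :
    dist x (dyadicCorner j (dyadicIndex j x)) ≤ √n / 2 ^ j := by
  rw [div_eq_mul_one_div]
  refine dist_le_sqrt_mul_of_abs_sub_le (by positivity) fun i => ?_
  have hj : (0 : ℝ) < 2 ^ j := by positivity
  have h₁ := Int.floor_le (2 ^ j * x i)
  have h₂ := Int.lt_floor_add_one (2 ^ j * x i)
  have hfrac : x i - ⌊2 ^ j * x i⌋ / 2 ^ j = (2 ^ j * x i - ⌊2 ^ j * x i⌋) / 2 ^ j := by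
    field_simp
  simp only [dyadicCorner, dyadicIndex, PiLp.toLp_apply]
  rw [hfrac, abs_div, abs_of_pos hj]
  exact div_le_div_of_nonneg_right (abs_le.2 ⟨by linarith, by linarith⟩) hj.le

lemma dyadicIndex_mem_box {x y : EuclideanSpace ℝ (Fin n)} {r : ℝ} {j L : ℕ}
    (hxy : dist y x ≤ r) (hL : 2 ^ j * r ≤ L) :
    dyadicIndex j y ∈
      Fintype.piFinset fun i => Icc (dyadicIndex j x i - L) (dyadicIndex j x i + L) := by
  rw [Fintype.mem_piFinset]
  intro i
  have hi : |2 ^ j * y i - 2 ^ j * x i| ≤ L := by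
    rw [← mul_sub, abs_mul, abs_of_pos (by positivity)]
    exact (mul_le_mul_of_nonneg_left ((PiLp.dist_apply_le y x i).trans hxy)
      (by positivity)).trans hL
  rw [abs_le] at hi
  rw [Finset.mem_Icc, dyadicIndex, dyadicIndex, ← Int.floor_sub_natCast, ← Int.floor_add_natCast]
  exact ⟨Int.floor_mono (by linarith), Int.floor_mono (by linarith)⟩

lemma card_box (a : Fin n → ℤ) (L : ℕ) :
    #(Fintype.piFinset fun i => Icc (a i - L) (a i + L)) = (2 * L + 1) ^ n := by
  have hcard : ∀ i, #(Icc (a i - L) (a i + L)) = 2 * L + 1 := fun i => by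
    rw [Int.card_Icc, show a i + L + 1 - (a i - L) = ((2 * L + 1 : ℕ) : ℤ) by push_cast; ring,
      Int.toNat_natCast]
  simp only [Fintype.card_piFinset, hcard, prod_const, card_univ, Fintype.card_fin]

lemma exists_finset_injOn_dyadicIndex {F : Set (EuclideanSpace ℝ (Fin n))}
    (hF : Bornology.IsBounded F) (j : ℕ) :
    ∃ P : Finset (EuclideanSpace ℝ (Fin n)), ↑P ⊆ F ∧
      Set.InjOn (dyadicIndex j) (↑P : Set (EuclideanSpace ℝ (Fin n))) ∧
      ∀ x ∈ F, ∃ u ∈ P, dyadicIndex j u = dyadicIndex j x := by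
  classical
  obtain ⟨R, hR⟩ := hF.subset_closedBall 0
  have hfin : (dyadicIndex j '' F).Finite := by
    refine (Fintype.piFinset fun i =>
      Icc (dyadicIndex j (0 : EuclideanSpace ℝ (Fin n)) i - ⌈2 ^ j * R⌉₊)
        (dyadicIndex j (0 : EuclideanSpace ℝ (Fin n)) i + ⌈2 ^ j * R⌉₊)).finite_toSet.subset ?_
    rintro _ ⟨x, hx, rfl⟩
    exact dyadicIndex_mem_box (hR hx) (Nat.le_ceil _)
  obtain ⟨P, hPF, hinj, himage⟩ :=
    exists_subset_injOn_image_eq_of_surjOn F hfin.toFinset fun a ha => by simpa using ha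
  refine ⟨P, hPF, hinj, fun x hx => ?_⟩
  have : dyadicIndex j x ∈ P.image (dyadicIndex j) := by
    rw [himage]
    exact hfin.mem_toFinset.2 ⟨x, hx, rfl⟩
  simpa using this

lemma sum_indicator_closedBall_le {P : Finset (EuclideanSpace ℝ (Fin n))}
    (f : EuclideanSpace ℝ (Fin n) → ℝ≥0∞) (x : EuclideanSpace ℝ (Fin n)) {r : ℝ} {j L : ℕ}
    (hL : 2 ^ j * r ≤ L) {c : ℝ≥0∞} (hc : ∀ a, ∑ u ∈ P with dyadicIndex j u = a, f u ≤ c) :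
    ∑ u ∈ P, (closedBall x r).indicator f u ≤ (2 * L + 1) ^ n * c := by
  classical
  set B := Fintype.piFinset fun i => Icc (dyadicIndex j x i - L) (dyadicIndex j x i + L)
  simp only [Set.indicator_apply]
  rw [← sum_filter]
  calc ∑ u ∈ P with u ∈ closedBall x r, f u
      = ∑ a ∈ B, ∑ u ∈ {u ∈ P | u ∈ closedBall x r} with dyadicIndex j u = a, f u :=
        (sum_fiberwise_of_maps_to (fun u hu => dyadicIndex_mem_box (mem_filter.1 hu).2 hL) f).symm
    _ ≤ ∑ _a ∈ B, c := sum_le_sum fun a _ =>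
        (sum_le_sum_of_subset (filter_subset_filter _ (filter_subset _ P))).trans (hc a)
    _ = (2 * L + 1) ^ n * c := by
        rw [sum_const, card_box, nsmul_eq_mul]
        norm_cast

lemma exists_pow_two_mul_le_one_lt {x : ℝ} (hx : 0 < x) (hx1 : x ≤ 1) :
    ∃ N : ℕ, 2 ^ N * x ≤ 1 ∧ 1 < 2 ^ (N + 1) * x := by
  obtain ⟨N, h₁, h₂⟩ := exists_nat_pow_near (one_le_one_div hx hx1) one_lt_two
  exact ⟨N, (le_div_iff₀ hx).1 (one_div x ▸ h₁), (div_lt_iff₀ hx).1 (one_div x ▸ h₂)⟩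

lemma exists_dyadic_scales {c lo hi : ℝ} (hc : 1 ≤ c) (hlo : 0 < lo) (hlohi : lo ≤ hi)
    (hhi : hi ≤ 1) :
    ∃ m M : ℕ, m ≤ M ∧ c ≤ 2 ^ m * hi ∧ 2 ^ m * hi ≤ 2 * c ∧
      1 ≤ 2 ^ (M + 1) * lo ∧ 2 ^ M * lo ≤ 2 * c := by
  have hc0 : 0 < c := one_pos.trans_le hc
  obtain ⟨m, hm₁, hm₂⟩ := exists_pow_two_mul_le_one_lt (div_pos (hlo.trans_le hlohi) hc0)
    ((div_le_one hc0).2 (hhi.trans hc))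
  obtain ⟨N, hN₁, hN₂⟩ := exists_pow_two_mul_le_one_lt hlo (hlohi.trans hhi)
  rw [← mul_div_assoc, div_le_one hc0] at hm₁
  rw [← mul_div_assoc, one_lt_div hc0] at hm₂
  refine ⟨m + 1, max (m + 1) N, le_max_left _ _, hm₂.le, by rw [pow_succ]; linarith, ?_, ?_⟩
  · exact hN₂.le.trans
      (mul_le_mul_of_nonneg_right (pow_le_pow_right₀ one_le_two (by omega)) hlo.le)
  · rcases le_total (m + 1) N with h | h
    · rw [max_eq_right h]; linarith
    · rw [max_eq_left h, pow_succ]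
      nlinarith [mul_le_mul_of_nonneg_left hlohi (pow_nonneg zero_le_two m)]

lemma exists_scale_mem_Icc {m M : ℕ} {K lo hi r : ℝ} (hmM : m ≤ M) (hK : 1 ≤ K)
    (hM : 1 ≤ 2 ^ (M + 1) * lo) (hm : 2 ^ m * hi ≤ K) (hlo : lo ≤ r) (hhi : r ≤ hi) :
    ∃ j, m ≤ j ∧ j ≤ M ∧ 1 ≤ 2 ^ (j + 1) * r ∧ 2 ^ j * r ≤ K := by
  classical
  have hmr : 2 ^ m * r ≤ K := (mul_le_mul_of_nonneg_left hhi (by positivity)).trans hm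
  set j := Nat.findGreatest (fun j => 2 ^ j * r ≤ K) M
  refine ⟨j, Nat.le_findGreatest hmM hmr, Nat.findGreatest_le M, ?_,
    Nat.findGreatest_spec (P := fun j => 2 ^ j * r ≤ K) hmM hmr⟩
  rcases (Nat.findGreatest_le (P := fun j => 2 ^ j * r ≤ K) M).lt_or_eq with hlt | heq
  · exact hK.trans (not_le.1 (Nat.findGreatest_is_greatest (P := fun j => 2 ^ j * r ≤ K)
      (lt_add_one j) hlt)).le
  · rw [show j = M from heq]
    exact hM.trans (mul_le_mul_of_nonneg_left hlo (by positivity))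

/-- The level `t` blocks are the dyadic cubes of side `2 ^ (-(M - t))`, each capped at mass
`2 ^ (-(M - t) s)`; the process stops at level `M - m`, i.e. at cubes of side `2⁻ᵐ`. -/
def dyadicWeight (P : Finset (EuclideanSpace ℝ (Fin n))) (s : ℝ) (m M : ℕ) :
    EuclideanSpace ℝ (Fin n) → ℝ≥0∞ :=
  cappedWeight P (fun t => dyadicIndex (M - t)) (fun t => ENNReal.ofReal (2 ^ (M - t))⁻¹ ^ s)
    (M - m)

lemma ofReal_lt_mul_sum_dyadicWeight (hn : 0 < n) {F : Set (EuclideanSpace ℝ (Fin n))}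
    {s lo hi ε : ℝ} (hs : 0 ≤ s) (hni : ¬ICov F s lo hi ε) (hlo : 0 ≤ lo) (hlohi : lo ≤ hi)
    {m M : ℕ} (hmM : m ≤ M) (hm : 2 * √n ≤ 2 ^ m * hi) (hM : 2 ^ M * lo ≤ 4 * √n)
    {P : Finset (EuclideanSpace ℝ (Fin n))}
    (hP : Set.InjOn (dyadicIndex M) (↑P : Set (EuclideanSpace ℝ (Fin n))))
    (hPF : ∀ x ∈ F, ∃ u ∈ P, dyadicIndex M u = dyadicIndex M x) :
    ENNReal.ofReal ε < ENNReal.ofReal (4 * √n) ^ s * ∑ u ∈ P, dyadicWeight P s m M u := by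
  have : Nonempty (Fin n) := ⟨⟨0, hn⟩⟩
  obtain ⟨ρ, hρ, hsum⟩ := exists_sum_cappedWeight_eq (k := fun t => dyadicIndex (M - t))
    (p := fun t => ENNReal.ofReal (2 ^ (M - t))⁻¹ ^ s) hP (dyadicIndex_sub_nested M)
    (ENNReal.rpow_ne_top_of_nonneg hs ENNReal.ofReal_ne_top) (M - m)
  rw [dyadicWeight, hsum, mul_sum]
  refine (ofReal_lt_sum_of_not_ICov hni hlo hlohi _ (fun γ => dyadicCorner (M - γ.1) γ.2)
    (fun γ => √n / 2 ^ (M - γ.1)) ?_ ?_).trans_le (sum_le_sum fun γ _ => ?_)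
  · intro x hx
    obtain ⟨u, hu, hux⟩ := hPF x hx
    refine Set.mem_iUnion₂.2 ⟨_, mem_image_of_mem _ hu, ?_⟩
    rw [mem_closedBall, dyadicIndex_eq_of_le (Nat.sub_le M (ρ u)) hux]
    exact dist_dyadicCorner_le _ x
  · intro γ hγ
    obtain ⟨u, -, rfl⟩ := mem_image.1 hγ
    have hj : (2 : ℝ) ^ m ≤ 2 ^ (M - ρ u) :=
      pow_le_pow_right₀ one_le_two (by have := hρ u; omega)
    calc 2 * (√n / 2 ^ (M - ρ u)) = 2 * √n / 2 ^ (M - ρ u) := by ring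
      _ ≤ 2 * √n / 2 ^ m := div_le_div_of_nonneg_left (by positivity) (by positivity) hj
      _ ≤ hi := (div_le_iff₀ (by positivity)).2 (by linarith)
  · have hj : (2 : ℝ) ^ (M - γ.1) ≤ 2 ^ M := pow_le_pow_right₀ one_le_two (Nat.sub_le M γ.1)
    rw [← ENNReal.mul_rpow_of_nonneg _ _ hs, ← ENNReal.ofReal_mul (by positivity)]
    refine ENNReal.rpow_le_rpow (ENNReal.ofReal_le_ofReal (max_le ?_ ?_)) hs
    · have : 0 ≤ √n * (2 ^ (M - γ.1) : ℝ)⁻¹ := by positivity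
      rw [div_eq_mul_inv]
      linarith
    · calc lo ≤ 4 * √n / 2 ^ M := (le_div_iff₀ (by positivity)).2 (by linarith)
        _ ≤ 4 * √n / 2 ^ (M - γ.1) :=
          div_le_div_of_nonneg_left (by positivity) (by positivity) hj
        _ = _ := div_eq_mul_inv _ _

lemma sum_indicator_closedBall_dyadicWeight_le {s : ℝ} (hs : 0 ≤ s) {m M j L : ℕ}
    {P : Finset (EuclideanSpace ℝ (Fin n))}
    (hP : Set.InjOn (dyadicIndex M) (↑P : Set (EuclideanSpace ℝ (Fin n))))
    (x : EuclideanSpace ℝ (Fin n)) {r : ℝ} (hmj : m ≤ j) (hjM : j ≤ M)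
    (hjr : 1 ≤ 2 ^ (j + 1) * r) (hL : 2 ^ j * r ≤ L) :
    ∑ u ∈ P, (closedBall x r).indicator (dyadicWeight P s m M) u ≤
      (2 * L + 1) ^ n * ENNReal.ofReal (2 * r) ^ s := by
  refine (sum_indicator_closedBall_le (c := ENNReal.ofReal (2 ^ j)⁻¹ ^ s) _ x hL
    fun a => ?_).trans (mul_le_mul' le_rfl (ENNReal.rpow_le_rpow (ENNReal.ofReal_le_ofReal ?_) hs))
  · have := blockMass_cappedWeight_le (k := fun t => dyadicIndex (M - t))
      (p := fun t => ENNReal.ofReal (2 ^ (M - t))⁻¹ ^ s) hP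
      (ENNReal.rpow_ne_top_of_nonneg hs ENNReal.ofReal_ne_top) (show M - j ≤ M - m by omega) a
    rwa [blockMass, Nat.sub_sub_self hjM] at this
  · rw [inv_le_iff_one_le_mul₀ (by positivity)]
    rw [pow_succ] at hjr
    linarith

def frostmanConst (n : ℕ) (s ε : ℝ) : ℝ :=
  (2 * ⌈4 * √n⌉₊ + 1) ^ n * (4 * √n) ^ s * 2 ^ s / ε

lemma ofReal_frostmanConst_mul {s ε r : ℝ} (hs : 0 ≤ s) (hε : 0 < ε) (hr : 0 ≤ r) :
    ENNReal.ofReal (4 * √n) ^ s / ENNReal.ofReal ε *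
        ((2 * ⌈4 * √n⌉₊ + 1) ^ n * ENNReal.ofReal (2 * r) ^ s) =
      ENNReal.ofReal (frostmanConst n s ε * r ^ s) := by
  rw [show frostmanConst n s ε * r ^ s =
      (4 * √n) ^ s / ε * ((2 * ⌈4 * √n⌉₊ + 1 : ℕ) ^ n * (2 * r) ^ s) by
    rw [frostmanConst, Real.mul_rpow zero_le_two hr]
    push_cast
    ring]
  symm
  rw [ENNReal.ofReal_mul (by positivity), ENNReal.ofReal_mul (by positivity),
    ENNReal.ofReal_div_of_pos hε, ← ENNReal.ofReal_rpow_of_nonneg (by positivity) hs,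
    ← ENNReal.ofReal_rpow_of_nonneg (by positivity) hs, ← Nat.cast_pow, ENNReal.ofReal_natCast]
  push_cast
  rfl

theorem exists_isFrostmanMeasure_of_not_ICov (hn : 0 < n) {F : Set (EuclideanSpace ℝ (Fin n))}
    (hF : Bornology.IsBounded F) {s lo hi ε : ℝ} (hs : 0 ≤ s) (hε : 0 < ε) (hlo : 0 < lo)
    (hlohi : lo ≤ hi) (hhi : hi ≤ 1) (hni : ¬ICov F s lo hi ε) :
    ∃ μ, IsFrostmanMeasure μ F s (frostmanConst n s ε) lo hi := by
  have hsqrt : 1 ≤ √n := Real.one_le_sqrt.2 (by exact_mod_cast hn)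
  obtain ⟨m, M, hmM, hm, hm', hM, hM'⟩ :=
    exists_dyadic_scales (c := 2 * √n) (by linarith) hlo hlohi hhi
  obtain ⟨P, hPF, hP, hPcov⟩ := exists_finset_injOn_dyadicIndex hF M
  have htotal :=
    ofReal_lt_mul_sum_dyadicWeight hn hs hni hlo.le hlohi hmM hm (by linarith) hP hPcov
  set w := dyadicWeight P s m M
  have h0 : ∑ u ∈ P, w u ≠ 0 := fun h => by simp [h] at htotal
  have htop : ∑ u ∈ P, w u ≠ ∞ := ENNReal.sum_ne_top.2 fun u _ =>
    cappedWeight_ne_top (ENNReal.rpow_ne_top_of_nonneg hs ENNReal.ofReal_ne_top)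
  have hinv : (∑ u ∈ P, w u)⁻¹ ≤ ENNReal.ofReal (4 * √n) ^ s / ENNReal.ofReal ε := by
    rw [ENNReal.le_div_iff_mul_le (Or.inl (ENNReal.ofReal_pos.2 hε).ne')
      (Or.inl ENNReal.ofReal_ne_top), ← ENNReal.div_eq_inv_mul, ENNReal.div_le_iff h0 htop]
    exact htotal.le
  obtain ⟨μ, hprob, hPc, hμ⟩ := exists_isProbabilityMeasure_sum_dirac P w h0 htop
  refine ⟨μ, hprob, measure_mono_null (Set.compl_subset_compl.2 hPF) hPc, ⟨P, hPc⟩,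
    fun x r hr hr' => ?_⟩
  obtain ⟨j, hmj, hjM, hjr, hjK⟩ :=
    exists_scale_mem_Icc hmM (by linarith : (1 : ℝ) ≤ 4 * √n) hM (by linarith) hr hr'
  rw [hμ, ← ofReal_frostmanConst_mul hs hε (hlo.le.trans hr)]
  exact mul_le_mul' hinv (sum_indicator_closedBall_dyadicWeight_le hs hP x hmj hjM hjr
    (hjK.trans (Nat.le_ceil _)))

end Frostman

end

theorem stmt10 (n : ℕ) (F : Set (EuclideanSpace ℝ (Fin n))) (hF : IsCompact F)
    (θ : ℝ) (hθ : θ ∈ Set.Ioc (0:ℝ) 1) (s : ℝ) (hs : 0 < s) (hsd : s < lowerIDim F θ) :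
    ∃ c > (0:ℝ), ∀ δ : ℝ, 0 < δ → δ < 1 →
      ∃ μ : MeasureTheory.Measure (EuclideanSpace ℝ (Fin n)),
        MeasureTheory.IsProbabilityMeasure μ ∧ μ Fᶜ = 0 ∧
        (∃ t : Finset (EuclideanSpace ℝ (Fin n)), μ ((↑t : Set (EuclideanSpace ℝ (Fin n)))ᶜ) = 0) ∧
        ∀ x : EuclideanSpace ℝ (Fin n), ∀ r : ℝ, δ ^ (1 / θ) ≤ r → r ≤ δ →
          μ (Metric.closedBall x r) ≤ ENNReal.ofReal (c * r ^ s) := by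
  obtain ⟨hθ0, hθ1⟩ := hθ
  obtain ⟨ε, hε, δ₀, hδ₀, hni⟩ := exists_not_ICov_of_lt_lowerIDim hθ0.ne' hs.le hsd
  obtain ⟨x₀, hx₀⟩ := nonempty_of_not_ICov (hni δ₀ hδ₀ le_rfl)
  have hn : 0 < n := Nat.pos_of_ne_zero fun h => by
    subst h
    exact (hs.trans (hsd.trans_eq (lowerIDim_eq_zero_of_subsingleton ⟨x₀, hx₀⟩ hθ0.ne'))).false
  refine ⟨max (Frostman.frostmanConst n s ε) ((δ₀ ^ (1 / θ)) ^ s)⁻¹,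
    lt_max_of_lt_right (by positivity), fun δ hδ hδ1 => ?_⟩
  rcases le_or_gt δ δ₀ with hδδ₀ | hδ₀δ
  · obtain ⟨μ, hμ⟩ := Frostman.exists_isFrostmanMeasure_of_not_ICov hn hF.isBounded hs.le hε
      (Real.rpow_pos_of_pos hδ _)
      (Real.rpow_le_self_of_le_one hδ.le hδ1.le (one_le_one_div hθ0 hθ1)) hδ1.le
      (hni δ hδ hδδ₀)
    exact ⟨μ, hμ.mono_const (by positivity) (le_max_left _ _)⟩
  · exact ⟨_, isFrostmanMeasure_dirac hx₀ hs.le (Real.rpow_pos_of_pos hδ₀ _)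
      (Real.rpow_le_rpow hδ₀.le hδ₀δ.le (by positivity)) (le_max_right _ _) δ⟩
end

section
/- For any non-empty bounded F ⊆ ℝⁿ and θ ∈ (0,1), the upper θ-intermediate dimension of F is at least dim_A F − (dim_A F − upper box dimension of F)/θ. In particular, if the lower box dimension of F equals its Assouad dimension, then for all θ ∈ (0,1] both the lower and upper θ-intermediate dimensions of F equal the Assouad dimension of F. -/
open Set

/-!
Let `a` be an Assouad exponent of `F` with constant `C`, `θ ∈ (0, 1]`, `η = δ ^ (1/θ)` and
`b = (1 - θ) a + θ s` with `s ≤ a`. In a cover witnessing the `θ`-intermediate dimension, a set `U`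
of diameter `R ∈ [η, δ]` meeting `F` lies in a ball of radius `R` about a point of `F`, so `F ∩ U`
is covered by at most `C 2^a (R/η)^a` balls of diameter exactly `η`, and `(R/η)^a η^b ≤ R^s`
because `η^θ = δ ≥ R`. Hence `Σ |U|^s ≤ ε` yields an `η`-cover with `b`-sum at most `C 2^a ε`,
which gives `dim_B ≤ (1 - θ) dim_A + θ dim_θ` for the upper and the lower versions alike (when
`s > a`, every exponent above `a` is already a box exponent). If the lower box dimension equals
`dim_A`, this squeezes `dim_θ ≤ dim_B = dim_A` to equalities. A grid of cubes gives `dim_A F ≤ n`,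
so all the infima are over nonempty sets; in `ℝ⁰` no cover consists of sets of positive diameter,
and every dimension there is `sInf ∅ = 0`.
-/

open Filter Topology
open scoped ENNReal

section PseudoEMetric

variable {X : Type} [PseudoEMetricSpace X]

def AssouadBound (F : Set X) (C a : ℝ) : Prop :=
  ∀ x ∈ F, ∀ r R : ℝ, 0 < r → r < R →
    ∃ t : Finset (Set X), (F ∩ Metric.closedEBall x (ENNReal.ofReal R) ⊆ ⋃ U ∈ t, U) ∧
      (∀ U ∈ t, Metric.ediam U ≤ ENNReal.ofReal r) ∧ (t.card : ℝ) ≤ C * (R / r) ^ a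

def assouadDimSet (F : Set X) : Set ℝ :=
  {a | 0 ≤ a ∧ ∃ C > (0:ℝ), AssouadBound F C a}

def upperBoxDimSet (F : Set X) : Set ℝ :=
  {s | 0 ≤ s ∧ ∀ ε > 0, ∃ δ₀ > (0:ℝ), ∀ δ : ℝ, 0 < δ → δ ≤ δ₀ → EqCov F s δ ε}

def lowerBoxDimSet (F : Set X) : Set ℝ :=
  {s | 0 ≤ s ∧ ∀ ε > 0, ∀ δ₀ > 0, ∃ δ : ℝ, 0 < δ ∧ δ ≤ δ₀ ∧ EqCov F s δ ε}

def upperIDimSet (F : Set X) (θ : ℝ) : Set ℝ :=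
  {s | 0 ≤ s ∧ ∀ ε > 0, ∃ δ₀ > (0:ℝ), ∀ δ : ℝ, 0 < δ → δ ≤ δ₀ →
    ICov F s (δ ^ (1 / θ)) δ ε}

def lowerIDimSet (F : Set X) (θ : ℝ) : Set ℝ :=
  {s | 0 ≤ s ∧ ∀ ε > 0, ∀ δ₀ > 0, ∃ δ : ℝ, 0 < δ ∧ δ ≤ δ₀ ∧ ICov F s (δ ^ (1 / θ)) δ ε}

theorem assouadDim_eq_sInf (F : Set X) : assouadDim F = sInf (assouadDimSet F) := rfl

theorem upperBoxDim_eq_sInf (F : Set X) : upperBoxDim F = sInf (upperBoxDimSet F) := rfl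

theorem upperIDim_eq_sInf (F : Set X) {θ : ℝ} (hθ : θ ≠ 0) :
    upperIDim F θ = sInf (upperIDimSet F θ) :=
  if_neg hθ

theorem lowerIDim_eq_sInf (F : Set X) {θ : ℝ} (hθ : θ ≠ 0) :
    lowerIDim F θ = sInf (lowerIDimSet F θ) :=
  if_neg hθ

theorem EqCov.iCov {F : Set X} {s δ ε θ : ℝ} (h : EqCov F s δ ε) (hδ : 0 < δ) (hδ1 : δ ≤ 1)
    (hθ : 0 < θ) (hθ1 : θ ≤ 1) : ICov F s (δ ^ (1 / θ)) δ ε := by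
  obtain ⟨ι, hι, U, hcov, hdiam, hsum⟩ := h
  have hle : δ ^ (1 / θ) ≤ δ := Real.rpow_le_self_of_le_one hδ.le hδ1 (one_le_one_div hθ hθ1)
  exact ⟨ι, hι, U, hcov, fun i => ⟨hdiam i ▸ ENNReal.ofReal_le_ofReal hle, (hdiam i).le⟩, hsum⟩

theorem upperBoxDimSet_subset_lowerBoxDimSet (F : Set X) : upperBoxDimSet F ⊆ lowerBoxDimSet F := by
  rintro s ⟨hs0, hs⟩
  refine ⟨hs0, fun ε hε δ₁ hδ₁ => ?_⟩
  obtain ⟨δ₀, hδ₀, h⟩ := hs ε hε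
  exact ⟨min δ₀ δ₁, lt_min hδ₀ hδ₁, min_le_right _ _, h _ (lt_min hδ₀ hδ₁) (min_le_left _ _)⟩

theorem upperIDimSet_subset_lowerIDimSet (F : Set X) (θ : ℝ) :
    upperIDimSet F θ ⊆ lowerIDimSet F θ := by
  rintro s ⟨hs0, hs⟩
  refine ⟨hs0, fun ε hε δ₁ hδ₁ => ?_⟩
  obtain ⟨δ₀, hδ₀, h⟩ := hs ε hε
  exact ⟨min δ₀ δ₁, lt_min hδ₀ hδ₁, min_le_right _ _, h _ (lt_min hδ₀ hδ₁) (min_le_left _ _)⟩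

theorem upperBoxDimSet_subset_upperIDimSet (F : Set X) {θ : ℝ} (hθ : 0 < θ) (hθ1 : θ ≤ 1) :
    upperBoxDimSet F ⊆ upperIDimSet F θ := by
  rintro s ⟨hs0, hs⟩
  refine ⟨hs0, fun ε hε => ?_⟩
  obtain ⟨δ₀, hδ₀, h⟩ := hs ε hε
  refine ⟨min δ₀ 1, lt_min hδ₀ one_pos, fun δ hδ hδle => ?_⟩
  exact (h δ hδ (hδle.trans (min_le_left _ _))).iCov hδ (hδle.trans (min_le_right _ _)) hθ hθ1

theorem lowerBoxDimSet_subset_lowerIDimSet (F : Set X) {θ : ℝ} (hθ : 0 < θ) (hθ1 : θ ≤ 1) :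
    lowerBoxDimSet F ⊆ lowerIDimSet F θ := by
  rintro s ⟨hs0, hs⟩
  refine ⟨hs0, fun ε hε δ₀ hδ₀ => ?_⟩
  obtain ⟨δ, hδ, hδle, h⟩ := hs ε hε (min δ₀ 1) (lt_min hδ₀ one_pos)
  exact ⟨δ, hδ, hδle.trans (min_le_left _ _),
    h.iCov hδ (hδle.trans (min_le_right _ _)) hθ hθ1⟩

theorem eqCov_of_finsets {F : Set X} {ι : Type} [Countable ι] (t : ι → Finset (Set X))
    {s η ε : ℝ} (hcov : F ⊆ ⋃ i, ⋃ W ∈ t i, W)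
    (hdiam : ∀ i, ∀ W ∈ t i, Metric.ediam W = ENNReal.ofReal η)
    (hsum : ∑' i, ((t i).card : ℝ≥0∞) * ENNReal.ofReal η ^ s ≤ ENNReal.ofReal ε) :
    EqCov F s η ε := by
  refine ⟨(i : ι) × t i, inferInstance, fun p => p.2, fun y hy => ?_, fun p => hdiam p.1 _ p.2.2,
    ?_⟩
  · obtain ⟨i, W, hW, hyW⟩ : ∃ i, ∃ W ∈ t i, y ∈ W := by simpa using hcov hy
    exact mem_iUnion.2 ⟨⟨i, W, hW⟩, hyW⟩
  · change ∑' p : (i : ι) × t i, Metric.ediam (p.2 : Set X) ^ s ≤ _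
    refine le_trans (le_of_eq ?_) hsum
    rw [ENNReal.tsum_sigma']
    refine tsum_congr fun i => ?_
    rw [tsum_fintype, Finset.sum_congr rfl fun W _ => by rw [hdiam i W W.2], Finset.sum_const,
      Finset.card_univ, Fintype.card_coe, nsmul_eq_mul]

theorem lowerBoxDim_le_upperBoxDim {F : Set X} (hUB : (upperBoxDimSet F).Nonempty) :
    lowerBoxDim F ≤ upperBoxDim F :=
  csInf_le_csInf ⟨0, fun _ h => h.1⟩ hUB (upperBoxDimSet_subset_lowerBoxDimSet F)

theorem upperIDim_le_upperBoxDim {F : Set X} (hUB : (upperBoxDimSet F).Nonempty) {θ : ℝ}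
    (hθ : 0 < θ) (hθ1 : θ ≤ 1) : upperIDim F θ ≤ upperBoxDim F := by
  rw [upperIDim_eq_sInf F hθ.ne']
  exact csInf_le_csInf ⟨0, fun _ h => h.1⟩ hUB (upperBoxDimSet_subset_upperIDimSet F hθ hθ1)

theorem lowerIDim_le_lowerBoxDim {F : Set X} (hUB : (upperBoxDimSet F).Nonempty) {θ : ℝ}
    (hθ : 0 < θ) (hθ1 : θ ≤ 1) : lowerIDim F θ ≤ lowerBoxDim F := by
  rw [lowerIDim_eq_sInf F hθ.ne']
  exact csInf_le_csInf ⟨0, fun _ h => h.1⟩ (hUB.mono (upperBoxDimSet_subset_lowerBoxDimSet F))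
    (lowerBoxDimSet_subset_lowerIDimSet F hθ hθ1)

end PseudoEMetric

section Subsingleton

variable {X : Type} [PseudoEMetricSpace X] [Subsingleton X] {F : Set X}

theorem not_iCov_of_subsingleton (hne : F.Nonempty) {s lo hi ε : ℝ} (hlo : 0 < lo) :
    ¬ ICov F s lo hi ε := by
  rintro ⟨ι, -, U, hcov, hdiam, -⟩
  obtain ⟨i, -⟩ := mem_iUnion.1 (hcov hne.some_mem)
  have hlo_le : ENNReal.ofReal lo ≤ Metric.ediam (U i) := (hdiam i).1
  rw [Metric.ediam_subsingleton Set.subsingleton_of_subsingleton] at hlo_le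
  exact (ENNReal.ofReal_pos.2 hlo).not_ge hlo_le

theorem lowerIDimSet_eq_empty_of_subsingleton (hne : F.Nonempty) (θ : ℝ) :
    lowerIDimSet F θ = ∅ :=
  eq_empty_of_forall_notMem fun _ ⟨_, hs⟩ =>
    let ⟨_, hδ, _, h⟩ := hs 1 one_pos 1 one_pos
    not_iCov_of_subsingleton hne (Real.rpow_pos_of_pos hδ _) h

theorem lowerIDim_of_subsingleton (hne : F.Nonempty) {θ : ℝ} (hθ : θ ≠ 0) :
    lowerIDim F θ = 0 := by
  rw [lowerIDim_eq_sInf F hθ, lowerIDimSet_eq_empty_of_subsingleton hne, Real.sInf_empty]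

theorem upperIDim_of_subsingleton (hne : F.Nonempty) {θ : ℝ} (hθ : θ ≠ 0) :
    upperIDim F θ = 0 := by
  have h := upperIDimSet_subset_lowerIDimSet F θ
  rw [lowerIDimSet_eq_empty_of_subsingleton hne, subset_empty_iff] at h
  rw [upperIDim_eq_sInf F hθ, h, Real.sInf_empty]

theorem upperBoxDim_of_subsingleton (hne : F.Nonempty) : upperBoxDim F = 0 := by
  have h := (upperBoxDimSet_subset_lowerBoxDimSet F).trans
    (lowerBoxDimSet_subset_lowerIDimSet F one_pos le_rfl)
  rw [lowerIDimSet_eq_empty_of_subsingleton hne, subset_empty_iff] at h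
  rw [upperBoxDim_eq_sInf, h, Real.sInf_empty]

theorem assouadDim_of_subsingleton (F : Set X) : assouadDim F = 0 := by
  refine IsLeast.csInf_eq ⟨⟨le_rfl, 1, one_pos, fun _ _ r R _ _ => ⟨{univ}, ?_, ?_, ?_⟩⟩,
    fun _ h => h.1⟩
  · simp
  · exact fun U _ => (Metric.ediam_subsingleton Set.subsingleton_of_subsingleton).trans_le bot_le
  · simp

end Subsingleton

theorem rpow_div_mul_rpow_le {η R a s θ : ℝ} (hη : 0 < η) (hR : 0 < R) (hRη : R ≤ η ^ θ)
    (hsa : s ≤ a) : (R / η) ^ a * η ^ ((1 - θ) * a + θ * s) ≤ R ^ s :=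
  calc (R / η) ^ a * η ^ ((1 - θ) * a + θ * s) = R ^ a * (η ^ θ) ^ (s - a) := by
        rw [Real.div_rpow hR.le hη.le, ← Real.rpow_mul hη.le, div_mul_eq_mul_div,
          div_eq_iff (Real.rpow_pos_of_pos hη a).ne', mul_assoc, ← Real.rpow_add hη]
        ring_nf
    _ ≤ R ^ a * R ^ (s - a) := mul_le_mul_of_nonneg_left
        (Real.rpow_le_rpow_of_nonpos hR hRη (by linarith)) (by positivity)
    _ = R ^ s := by rw [← Real.rpow_add hR]; ring_nf

theorem exists_forall_of_eventually_nhdsGT {P : ℝ → Prop} (h : ∀ᶠ δ in 𝓝[>] 0, P δ) :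
    ∃ δ₀ > (0:ℝ), ∀ δ : ℝ, 0 < δ → δ ≤ δ₀ → P δ := by
  obtain ⟨u, hu, hP⟩ := mem_nhdsGT_iff_exists_Ioc_subset.1 h
  exact ⟨u, hu, fun δ hδ hδu => hP ⟨hδ, hδu⟩⟩

theorem csInf_le_convexComb {S T B : Set ℝ} (hS : S.Nonempty) (hT : T.Nonempty) (hB : BddBelow B)
    {θ : ℝ} (hθ0 : 0 ≤ θ) (hθ1 : θ ≤ 1) (h : ∀ a ∈ T, ∀ s ∈ S, (1 - θ) * a + θ * s ∈ B) :
    sInf B ≤ (1 - θ) * sInf T + θ * sInf S := by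
  refine le_of_forall_pos_le_add fun ε hε => ?_
  obtain ⟨a, ha, haε⟩ := exists_lt_of_csInf_lt hT (lt_add_of_pos_right (sInf T) hε)
  obtain ⟨s, hs, hsε⟩ := exists_lt_of_csInf_lt hS (lt_add_of_pos_right (sInf S) hε)
  calc sInf B ≤ (1 - θ) * a + θ * s := csInf_le hB (h a ha s hs)
    _ ≤ (1 - θ) * (sInf T + ε) + θ * (sInf S + ε) := by gcongr
    _ = (1 - θ) * sInf T + θ * sInf S + ε := by ring

theorem ENNReal.natCast_mul_ofReal_rpow (k : ℕ) {η : ℝ} (hη : 0 < η) (s : ℝ) :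
    (k : ℝ≥0∞) * ENNReal.ofReal η ^ s = ENNReal.ofReal (k * η ^ s) := by
  rw [ENNReal.ofReal_mul k.cast_nonneg, ENNReal.ofReal_natCast, ENNReal.ofReal_rpow_of_pos hη]

section NormedSpace

variable {E : Type} [NormedAddCommGroup E] [NormedSpace ℝ E] [Nontrivial E] {F : Set E}

theorem ediam_closedBall_eq (x : E) {r : ℝ} (hr : 0 ≤ r) :
    Metric.ediam (Metric.closedBall x r) = ENNReal.ofReal (2 * r) := by
  rw [← Metric.diam_closedBall_eq x hr, Metric.diam,
    ENNReal.ofReal_toReal Metric.isBounded_closedBall.ediam_ne_top]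

theorem AssouadBound.exists_cover_ediam_eq {C a : ℝ} (hA : AssouadBound F C a) {x : E}
    (hx : x ∈ F) {r R : ℝ} (hr : 0 < r) (hrR : r < 2 * R) :
    ∃ t : Finset (Set E), F ∩ Metric.closedEBall x (ENNReal.ofReal R) ⊆ ⋃ W ∈ t, W ∧
      (∀ W ∈ t, Metric.ediam W = ENNReal.ofReal r) ∧
      (t.card : ℝ) ≤ C * 2 ^ a * (R / r) ^ a := by
  classical
  obtain ⟨t₀, hcov, hdiam, hcard⟩ := hA x hx (r / 2) R (half_pos hr) (by linarith)
  let center : Set E → E := fun W => Classical.epsilon (· ∈ W)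
  refine ⟨t₀.image fun W => Metric.closedBall (center W) (r / 2), fun y hy => ?_, ?_, ?_⟩
  · obtain ⟨W, hW, hyW⟩ : ∃ W ∈ t₀, y ∈ W := by simpa using hcov hy
    have hc : center W ∈ W := Classical.epsilon_spec ⟨y, hyW⟩
    have hy_c : edist y (center W) ≤ ENNReal.ofReal (r / 2) :=
      (Metric.edist_le_ediam_of_mem hyW hc).trans (hdiam W hW)
    refine mem_iUnion₂.2 ⟨_, Finset.mem_image_of_mem _ hW, ?_⟩
    rwa [Metric.mem_closedBall, ← edist_le_ofReal (by positivity)]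
  · simp only [Finset.mem_image]
    rintro _ ⟨W, -, rfl⟩
    rw [ediam_closedBall_eq _ (by positivity)]
    ring_nf
  · have hR : 0 ≤ R / r := div_nonneg (by linarith) hr.le
    calc ((t₀.image _).card : ℝ) ≤ t₀.card := by exact_mod_cast Finset.card_image_le
      _ ≤ C * (R / (r / 2)) ^ a := hcard
      _ = C * 2 ^ a * (R / r) ^ a := by
        rw [show R / (r / 2) = 2 * (R / r) by ring, Real.mul_rpow zero_le_two hR, mul_assoc]

theorem AssouadBound.exists_cover_inter_ediam_eq {U : Set E} {C a s θ η : ℝ}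
    (hA : AssouadBound F C a) (hC : 0 ≤ C) (hη : 0 < η) (hsa : s ≤ a)
    (hηU : ENNReal.ofReal η ≤ Metric.ediam U) (hUη : Metric.ediam U ≤ ENNReal.ofReal (η ^ θ)) :
    ∃ t : Finset (Set E), F ∩ U ⊆ ⋃ W ∈ t, W ∧ (∀ W ∈ t, Metric.ediam W = ENNReal.ofReal η) ∧
      (t.card : ℝ≥0∞) * ENNReal.ofReal η ^ ((1 - θ) * a + θ * s) ≤
        ENNReal.ofReal (C * 2 ^ a) * Metric.ediam U ^ s := by
  rcases (F ∩ U).eq_empty_or_nonempty with hFU | ⟨x, hxF, hxU⟩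
  · exact ⟨∅, by simp [hFU], by simp, by simp⟩
  set R := (Metric.ediam U).toReal
  have hUR : Metric.ediam U = ENNReal.ofReal R :=
    (ENNReal.ofReal_toReal (ne_top_of_le_ne_top ENNReal.ofReal_ne_top hUη)).symm
  rw [hUR] at hηU hUη ⊢
  have hηR : η ≤ R := (ENNReal.ofReal_le_ofReal_iff ENNReal.toReal_nonneg).1 hηU
  have hRη : R ≤ η ^ θ := (ENNReal.ofReal_le_ofReal_iff (by positivity)).1 hUη
  have hR : 0 < R := hη.trans_le hηR
  obtain ⟨t, hcov, hdiam, hcard⟩ := hA.exists_cover_ediam_eq hxF hη (R := R) (by linarith)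
  refine ⟨t, fun y hy => hcov ⟨hy.1, ?_⟩, hdiam, ?_⟩
  · rw [Metric.mem_closedEBall, ← hUR]
    exact Metric.edist_le_ediam_of_mem hy.2 hxU
  · rw [ENNReal.natCast_mul_ofReal_rpow _ hη, ENNReal.ofReal_rpow_of_pos hR,
      ← ENNReal.ofReal_mul (by positivity)]
    refine ENNReal.ofReal_le_ofReal ?_
    calc (t.card : ℝ) * η ^ ((1 - θ) * a + θ * s)
        ≤ C * 2 ^ a * (R / η) ^ a * η ^ ((1 - θ) * a + θ * s) := by gcongr
      _ ≤ C * 2 ^ a * R ^ s := by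
        rw [mul_assoc]
        gcongr
        exact rpow_div_mul_rpow_le hη hR hRη hsa

theorem AssouadBound.eqCov_of_iCov {C a s θ η ε : ℝ} (hA : AssouadBound F C a) (hC : 0 ≤ C)
    (hη : 0 < η) (hsa : s ≤ a) (h : ICov F s η (η ^ θ) ε) :
    EqCov F ((1 - θ) * a + θ * s) η (C * 2 ^ a * ε) := by
  obtain ⟨ι, hι, U, hcov, hdiam, hsum⟩ := h
  choose t ht_cov ht_diam ht_sum using fun i =>
    hA.exists_cover_inter_ediam_eq hC hη hsa (hdiam i).1 (hdiam i).2
  refine eqCov_of_finsets t (fun y hy => ?_) ht_diam ?_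
  · obtain ⟨i, hi⟩ := mem_iUnion.1 (hcov hy)
    exact mem_iUnion.2 ⟨i, ht_cov i ⟨hy, hi⟩⟩
  · calc ∑' i, ((t i).card : ℝ≥0∞) * ENNReal.ofReal η ^ ((1 - θ) * a + θ * s)
        ≤ ∑' i, ENNReal.ofReal (C * 2 ^ a) * Metric.ediam (U i) ^ s :=
          ENNReal.tsum_le_tsum ht_sum
      _ = ENNReal.ofReal (C * 2 ^ a) * ∑' i, Metric.ediam (U i) ^ s := ENNReal.tsum_mul_left
      _ ≤ ENNReal.ofReal (C * 2 ^ a) * ENNReal.ofReal ε := by gcongr; exact hsum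
      _ = ENNReal.ofReal (C * 2 ^ a * ε) :=
          (ENNReal.ofReal_mul (mul_nonneg hC (by positivity))).symm

theorem AssouadBound.mem_upperBoxDimSet {C a s : ℝ} (hA : AssouadBound F C a)
    (hne : F.Nonempty) (hF : Bornology.IsBounded F) (ha : 0 ≤ a) (has : a < s) :
    s ∈ upperBoxDimSet F := by
  obtain ⟨x, hx⟩ := hne
  set R := Metric.diam F + 1
  have hR : 0 < R := by positivity
  have hFR : F ⊆ Metric.closedEBall x (ENNReal.ofReal R) := fun y hy => by
    rw [Metric.closedEBall_ofReal hR.le, Metric.mem_closedBall]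
    exact (Metric.dist_le_diam_of_mem hF hy hx).trans (by linarith)
  refine ⟨by linarith, fun ε hε => exists_forall_of_eventually_nhdsGT ?_⟩
  have hlim : Tendsto (fun δ : ℝ => C * 2 ^ a * R ^ a * δ ^ (s - a)) (𝓝[>] 0) (𝓝 0) := by
    have := ((Real.continuousAt_rpow_const 0 (s - a) (Or.inr (by linarith))).const_mul
      (C * 2 ^ a * R ^ a)).tendsto
    simpa [Real.zero_rpow (by linarith : s - a ≠ 0)] using this.mono_left nhdsWithin_le_nhds
  filter_upwards [hlim.eventually (ge_mem_nhds hε), self_mem_nhdsWithin,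
    eventually_nhdsWithin_of_eventually_nhds (eventually_lt_nhds (by linarith : (0:ℝ) < 2 * R))]
    with δ hδε (hδ : 0 < δ) hδR
  obtain ⟨t, hcov, hdiam, hcard⟩ := hA.exists_cover_ediam_eq hx hδ hδR
  refine eqCov_of_finsets (fun _ : Unit => t) (fun y hy => mem_iUnion.2 ⟨(), hcov ⟨hy, hFR hy⟩⟩)
    (fun _ => hdiam) ?_
  rw [tsum_fintype, Finset.univ_unique, Finset.sum_singleton,
    ENNReal.natCast_mul_ofReal_rpow _ hδ]
  refine ENNReal.ofReal_le_ofReal ?_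
  calc (t.card : ℝ) * δ ^ s ≤ C * 2 ^ a * (R / δ) ^ a * δ ^ s := by gcongr
    _ = C * 2 ^ a * R ^ a * δ ^ (s - a) := by
      rw [Real.div_rpow hR.le hδ.le, Real.rpow_sub hδ]
      field_simp
    _ ≤ ε := hδε

theorem upperBoxDimSet_nonempty (hne : F.Nonempty) (hF : Bornology.IsBounded F)
    (hA : (assouadDimSet F).Nonempty) : (upperBoxDimSet F).Nonempty :=
  let ⟨a, ha, _, _, hAB⟩ := hA
  ⟨a + 1, hAB.mem_upperBoxDimSet hne hF ha (lt_add_one a)⟩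

theorem upperBoxDim_le_assouadDim (hne : F.Nonempty) (hF : Bornology.IsBounded F)
    (hA : (assouadDimSet F).Nonempty) : upperBoxDim F ≤ assouadDim F := by
  rw [assouadDim_eq_sInf]
  exact le_csInf hA fun _ ⟨ha, _, _, hAB⟩ => le_of_forall_gt_imp_ge_of_dense fun _ hs =>
    csInf_le ⟨0, fun _ h => h.1⟩ (hAB.mem_upperBoxDimSet hne hF ha hs)

theorem convexComb_mem_upperBoxDimSet (hne : F.Nonempty) (hF : Bornology.IsBounded F)
    {θ a s : ℝ} (hθ : 0 < θ) (hθ1 : θ ≤ 1) (ha : a ∈ assouadDimSet F)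
    (hs : s ∈ upperIDimSet F θ) : (1 - θ) * a + θ * s ∈ upperBoxDimSet F := by
  obtain ⟨ha0, C, hC, hA⟩ := ha
  obtain ⟨hs0, hs⟩ := hs
  rcases lt_or_ge a s with has | hsa
  · exact hA.mem_upperBoxDimSet hne hF ha0 (by nlinarith)
  refine ⟨add_nonneg (mul_nonneg (by linarith) ha0) (mul_nonneg hθ.le hs0), fun ε hε => ?_⟩
  obtain ⟨δ₀, hδ₀, h⟩ := hs (ε / (C * 2 ^ a)) (by positivity)
  refine ⟨δ₀ ^ (1 / θ), by positivity, fun η hη hηδ₀ => ?_⟩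
  have hη_rpow : (η ^ θ) ^ (1 / θ) = η := by
    rw [← Real.rpow_mul hη.le, mul_one_div_cancel hθ.ne', Real.rpow_one]
  have hle : η ^ θ ≤ δ₀ := by
    calc η ^ θ ≤ (δ₀ ^ (1 / θ)) ^ θ := by gcongr
      _ = δ₀ := by rw [← Real.rpow_mul hδ₀.le, one_div_mul_cancel hθ.ne', Real.rpow_one]
  have hicov := h (η ^ θ) (by positivity) hle
  rw [hη_rpow] at hicov
  simpa only [mul_div_cancel₀ _ (by positivity : C * 2 ^ a ≠ 0)] using
    hA.eqCov_of_iCov hC.le hη hsa hicov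

theorem convexComb_mem_lowerBoxDimSet (hne : F.Nonempty) (hF : Bornology.IsBounded F)
    {θ a s : ℝ} (hθ : 0 < θ) (hθ1 : θ ≤ 1) (ha : a ∈ assouadDimSet F)
    (hs : s ∈ lowerIDimSet F θ) : (1 - θ) * a + θ * s ∈ lowerBoxDimSet F := by
  obtain ⟨ha0, C, hC, hA⟩ := ha
  obtain ⟨hs0, hs⟩ := hs
  rcases lt_or_ge a s with has | hsa
  · exact upperBoxDimSet_subset_lowerBoxDimSet F
      (hA.mem_upperBoxDimSet hne hF ha0 (by nlinarith))
  refine ⟨add_nonneg (mul_nonneg (by linarith) ha0) (mul_nonneg hθ.le hs0),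
    fun ε hε δ₀ hδ₀ => ?_⟩
  obtain ⟨δ, hδ, hδδ₀, hicov⟩ := hs (ε / (C * 2 ^ a)) (by positivity) (δ₀ ^ θ) (by positivity)
  obtain ⟨η, hη, rfl⟩ : ∃ η > 0, δ = η ^ θ := ⟨δ ^ (1 / θ), by positivity,
    by rw [← Real.rpow_mul hδ.le, one_div_mul_cancel hθ.ne', Real.rpow_one]⟩
  rw [← Real.rpow_mul hη.le, mul_one_div_cancel hθ.ne', Real.rpow_one] at hicov
  refine ⟨η, hη, (Real.rpow_le_rpow_iff hη.le hδ₀.le hθ).1 hδδ₀, ?_⟩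
  simpa only [mul_div_cancel₀ _ (by positivity : C * 2 ^ a ≠ 0)] using
    hA.eqCov_of_iCov hC.le hη hsa hicov

theorem upperBoxDim_le_convexComb (hne : F.Nonempty) (hF : Bornology.IsBounded F)
    (hA : (assouadDimSet F).Nonempty) {θ : ℝ} (hθ : 0 < θ) (hθ1 : θ ≤ 1) :
    upperBoxDim F ≤ (1 - θ) * assouadDim F + θ * upperIDim F θ := by
  rw [upperIDim_eq_sInf F hθ.ne']
  exact csInf_le_convexComb
    ((upperBoxDimSet_nonempty hne hF hA).mono (upperBoxDimSet_subset_upperIDimSet F hθ hθ1)) hA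
    ⟨0, fun _ h => h.1⟩ hθ.le hθ1 fun _ ha _ hs => convexComb_mem_upperBoxDimSet hne hF hθ hθ1 ha hs

theorem lowerBoxDim_le_convexComb (hne : F.Nonempty) (hF : Bornology.IsBounded F)
    (hA : (assouadDimSet F).Nonempty) {θ : ℝ} (hθ : 0 < θ) (hθ1 : θ ≤ 1) :
    lowerBoxDim F ≤ (1 - θ) * assouadDim F + θ * lowerIDim F θ := by
  rw [lowerIDim_eq_sInf F hθ.ne']
  have hUB := upperBoxDimSet_nonempty hne hF hA
  exact csInf_le_convexComb ((hUB.mono (upperBoxDimSet_subset_lowerBoxDimSet F)).mono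
    (lowerBoxDimSet_subset_lowerIDimSet F hθ hθ1)) hA
    ⟨0, fun _ h => h.1⟩ hθ.le hθ1 fun _ ha _ hs => convexComb_mem_lowerBoxDimSet hne hF hθ hθ1 ha hs

end NormedSpace

section Euclidean

variable {n : ℕ}

def gridCell (h : ℝ) (c : Fin n → ℤ) : Set (EuclideanSpace ℝ (Fin n)) :=
  {y | ∀ i, y i ∈ Icc (c i * h) (c i * h + h)}

theorem mem_gridCell_floor {h : ℝ} (hh : 0 < h) (y : EuclideanSpace ℝ (Fin n)) :
    y ∈ gridCell h (fun i => ⌊y i / h⌋) := fun i => by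
  have hlt := (div_lt_iff₀ hh).1 (Int.lt_floor_add_one (y i / h))
  exact ⟨(le_div_iff₀ hh).1 (Int.floor_le _), by linarith⟩

theorem ediam_gridCell_le {h : ℝ} (hh : 0 ≤ h) (c : Fin n → ℤ) :
    Metric.ediam (gridCell h c) ≤ ENNReal.ofReal (√n * h) := by
  refine Metric.ediam_le_of_forall_dist_le fun y hy z hz => ?_
  calc dist y z = √(∑ i, dist (y i) (z i) ^ 2) := EuclideanSpace.dist_eq y z
    _ ≤ √(∑ _i : Fin n, h ^ 2) := by
      gcongr with i
      exact (Real.dist_le_of_mem_Icc (hy i) (hz i)).trans_eq (by ring)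
    _ = √n * h := by simp [Real.sqrt_mul, Real.sqrt_sq hh]

theorem card_Icc_floor_div_le {h u v : ℝ} (hh : 0 < h) (huv : u ≤ v) :
    ((Finset.Icc ⌊u / h⌋ ⌊v / h⌋).card : ℝ) ≤ (v - u) / h + 2 := by
  rw [Int.card_Icc, ← Int.cast_natCast, Int.toNat_eq_max, Int.cast_max, Int.cast_zero]
  have hv := Int.floor_le (v / h)
  have hu := Int.sub_one_lt_floor (u / h)
  refine max_le ?_ (by positivity)
  push_cast
  rw [sub_div]
  linarith

theorem natCast_mem_assouadDimSet (F : Set (EuclideanSpace ℝ (Fin n))) :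
    (n : ℝ) ∈ assouadDimSet F := by
  classical
  refine ⟨n.cast_nonneg, (2 * √n + 4) ^ n, by positivity, fun x _ r R hr hrR => ?_⟩
  -- cells of side `h` have diameter `√n * h ≤ r`, and at most `2R/h + 2` per axis meet the ball
  set h := r / (√n + 1)
  have hh : 0 < h := by positivity
  have hRr : 1 ≤ R / r := (one_le_div hr).2 hrR.le
  let G := Fintype.piFinset fun i => Finset.Icc ⌊(x i - R) / h⌋ ⌊(x i + R) / h⌋
  refine ⟨G.image (gridCell h), ?_, ?_, ?_⟩
  · rintro y ⟨-, hy⟩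
    rw [Metric.closedEBall_ofReal (hr.le.trans hrR.le), Metric.mem_closedBall] at hy
    refine mem_iUnion₂.2 ⟨_, Finset.mem_image_of_mem _ (Fintype.mem_piFinset.2 fun i => ?_),
      mem_gridCell_floor hh y⟩
    have hyx := abs_le.1 ((Real.dist_eq _ _ ▸ PiLp.dist_apply_le y x i).trans hy)
    exact Finset.mem_Icc.2 ⟨by gcongr; linarith, by gcongr; linarith⟩
  · simp only [Finset.mem_image]
    rintro _ ⟨c, -, rfl⟩
    refine (ediam_gridCell_le hh.le c).trans (ENNReal.ofReal_le_ofReal ?_)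
    rw [mul_div_assoc', div_le_iff₀ (by positivity)]
    nlinarith
  · calc ((G.image (gridCell h)).card : ℝ) ≤ G.card := by exact_mod_cast Finset.card_image_le
      _ = ∏ i, ((Finset.Icc ⌊(x i - R) / h⌋ ⌊(x i + R) / h⌋).card : ℝ) := by
        rw [Fintype.card_piFinset]; push_cast; rfl
      _ ≤ ∏ _i : Fin n, ((2 * √n + 4) * (R / r)) := by
        gcongr with i
        refine (card_Icc_floor_div_le hh (by linarith)).trans ?_
        rw [show (x i + R - (x i - R)) / h = (2 * √n + 2) * (R / r) by
          simp only [h]; field_simp; ring]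
        nlinarith
      _ = (2 * √n + 4) ^ n * (R / r) ^ (n : ℝ) := by
        rw [Finset.prod_const, Finset.card_univ, Fintype.card_fin, mul_pow, Real.rpow_natCast]

end Euclidean

theorem stmt12 (n : ℕ) (F : Set (EuclideanSpace ℝ (Fin n))) (hne : F.Nonempty)
    (hF : Bornology.IsBounded F) :
    (∀ θ ∈ Set.Ioo (0:ℝ) 1,
      assouadDim F - (assouadDim F - upperBoxDim F) / θ ≤ upperIDim F θ) ∧
    (lowerBoxDim F = assouadDim F → ∀ θ ∈ Set.Ioc (0:ℝ) 1,
      lowerIDim F θ = assouadDim F ∧ upperIDim F θ = assouadDim F) := by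
  rcases subsingleton_or_nontrivial (EuclideanSpace ℝ (Fin n)) with hE | hE
  · refine ⟨fun θ hθ => ?_, fun _ θ hθ => ?_⟩
    · simp [assouadDim_of_subsingleton, upperBoxDim_of_subsingleton hne,
        upperIDim_of_subsingleton hne hθ.1.ne']
    · simp [assouadDim_of_subsingleton, lowerIDim_of_subsingleton hne hθ.1.ne',
        upperIDim_of_subsingleton hne hθ.1.ne']
  have hA : (assouadDimSet F).Nonempty := ⟨n, natCast_mem_assouadDimSet F⟩
  have hUB := upperBoxDimSet_nonempty hne hF hA
  refine ⟨fun θ ⟨hθ, hθ1⟩ => ?_, fun hLA θ ⟨hθ, hθ1⟩ => ?_⟩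
  · have := upperBoxDim_le_convexComb hne hF hA hθ hθ1.le
    rw [sub_le_comm, le_div_iff₀ hθ]
    linarith
  have hUA : upperBoxDim F = assouadDim F :=
    (upperBoxDim_le_assouadDim hne hF hA).antisymm (hLA ▸ lowerBoxDim_le_upperBoxDim hUB)
  have hU := upperBoxDim_le_convexComb hne hF hA hθ hθ1
  have hL := lowerBoxDim_le_convexComb hne hF hA hθ hθ1
  have hU' := upperIDim_le_upperBoxDim hUB hθ hθ1
  have hL' := lowerIDim_le_lowerBoxDim hUB hθ hθ1
  constructor <;> nlinarith
end
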